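/- Fix a nonnegative integer s and nonnegative integers a1, a2, a3, a4, a5, a6. There is at most one tuple (m1, m2, m3, m4, m4', m5, m6, m7) of nonnegative integers satisfying: m2 ≤ m6, m3 ≤ m5, m4 + m5 ≤ m7, min(m4, m4') = 0, m1 + m2 + m3 + m4 + m4' + m5 + m6 + m7 = s, together with the equations m1 = a1, m6 - m2 = a2, m2 = a3, m5 - m3 = a4, m3 + m4' = a5, and m7 - m4 - m5 = a6. (This expresses that the decomposition of the E7-crystal B(sϖ7) into type A6 highest weight crystals is multiplicity free.) -/
import Mathlib


/-- The decomposition of the `E₇`-crystal `B(sϖ₇)` into type `A₆` highest weight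
crystals is multiplicity free: the tuple of multiplicities is determined by the weight. -/
theorem A6_decomposition_multiplicity_free (s a1 a2 a3 a4 a5 a6 : ℕ)
    (m1 m2 m3 m4 m4' m5 m6 m7 n1 n2 n3 n4 n4' n5 n6 n7 : ℕ)
    (hm26 : m2 ≤ m6) (hm35 : m3 ≤ m5) (hm457 : m4 + m5 ≤ m7)
    (hmmin : min m4 m4' = 0)
    (hmsum : m1 + m2 + m3 + m4 + m4' + m5 + m6 + m7 = s)
    (hma1 : m1 = a1) (hma2 : m6 - m2 = a2) (hma3 : m2 = a3)
    (hma4 : m5 - m3 = a4) (hma5 : m3 + m4' = a5) (hma6 : m7 - m4 - m5 = a6)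
    (hn26 : n2 ≤ n6) (hn35 : n3 ≤ n5) (hn457 : n4 + n5 ≤ n7)
    (hnmin : min n4 n4' = 0)
    (hnsum : n1 + n2 + n3 + n4 + n4' + n5 + n6 + n7 = s)
    (hna1 : n1 = a1) (hna2 : n6 - n2 = a2) (hna3 : n2 = a3)
    (hna4 : n5 - n3 = a4) (hna5 : n3 + n4' = a5) (hna6 : n7 - n4 - n5 = a6) :
    m1 = n1 ∧ m2 = n2 ∧ m3 = n3 ∧ m4 = n4 ∧ m4' = n4' ∧ m5 = n5 ∧ m6 = n6 ∧ m7 = n7 := by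
  omega
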